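/- For each backward sequence (…, s_{-3}, s_{-2}, s_{-1}) of residue classes in F, there exists a (1/q)-Lipschitz function g : R → R whose horizontal curve H(g) = {(t,g(t)) : t ∈ R} equals exactly the set of points (x,y) ∈ R² such that T^{k+1}(x,y) ∈ R × D_{1/q}(s_k) for all k ≤ -1. Moreover, the attractor A_T = ⋂_{n≥1} Tⁿ(R²) is the union of these horizontal curves over all backward sequences. -/

import Mathlib

open scoped Classical
open MeasureTheory Filter

noncomputable section

/-- A complete, locally compact non-Archimedean field with residue field of
order `q`, absolute value normalized so that a uniformizer has norm `1/q`.
`reps` is a set of `q` coset representatives for the residue field: they cover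
the ring of integers by discs of radius `1/q` and are pairwise at distance
`> 1/q`. -/
structure NAField (K : Type*) [NormedField K] where
  na : IsNonarchimedean (fun x : K => ‖x‖)
  complete : CompleteSpace K
  locCompact : LocallyCompactSpace K
  q : ℕ
  one_lt_q : 1 < q
  valGroup : ∀ x : K, x ≠ 0 → ∃ n : ℤ, ‖x‖ = (q : ℝ) ^ n
  exists_unif : ∃ ϖ : K, ‖ϖ‖ = (q : ℝ)⁻¹
  reps : Finset K
  card_reps : reps.card = q
  norm_reps : ∀ s ∈ reps, ‖s‖ ≤ 1
  reps_cover : ∀ x : K, ‖x‖ ≤ 1 → ∃ s ∈ reps, ‖x - s‖ ≤ (q : ℝ)⁻¹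
  reps_sep : ∀ s ∈ reps, ∀ t ∈ reps, s ≠ t → (q : ℝ)⁻¹ < ‖s - t‖

variable {K : Type*} [NormedField K]

/-- `f : R → R` is `(1/q)`-Lipschitz on the ring of integers. -/
def NAField.IsLip (F : NAField K) (f : K → K) : Prop :=
  (∀ t : K, ‖t‖ ≤ 1 → ‖f t‖ ≤ 1) ∧
  ∀ t₁ t₂ : K, ‖t₁‖ ≤ 1 → ‖t₂‖ ≤ 1 → ‖f t₁ - f t₂‖ ≤ ((F.q : ℝ))⁻¹ * ‖t₁ - t₂‖

/-- The unit polydisc `R² ⊆ K²`. -/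
def unitPoly (K : Type*) [NormedField K] : Set (K × K) := {p | ‖p.1‖ ≤ 1 ∧ ‖p.2‖ ≤ 1}

/-- Horizontal `δ`-neighborhood `H_δ(f) = {(t, f t + θ) : t ∈ R, |θ| ≤ δ}`. -/
def Hnbhd (f : K → K) (δ : ℝ) : Set (K × K) :=
  {p | ∃ t θ : K, ‖t‖ ≤ 1 ∧ ‖θ‖ ≤ δ ∧ p = (t, f t + θ)}

/-- Vertical `δ`-neighborhood `V_δ(f) = {(f t + θ, t) : t ∈ R, |θ| ≤ δ}`. -/
def Vnbhd (f : K → K) (δ : ℝ) : Set (K × K) :=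
  {p | ∃ t θ : K, ‖t‖ ≤ 1 ∧ ‖θ‖ ≤ δ ∧ p = (f t + θ, t)}

/-- The automorphism `T(x,y) = (a y + b (x^q - x), x)`. -/
def NAField.Tmap (F : NAField K) (a b : K) : K × K → K × K :=
  fun p => (a * p.2 + b * (p.1 ^ F.q - p.1), p.1)

/-- The inverse automorphism `T⁻¹(x,y) = (y, a⁻¹ (x - b (y^q - y)))`. -/
def NAField.Tinv (F : NAField K) (a b : K) : K × K → K × K :=
  fun p => (p.2, a⁻¹ * (p.1 - b * (p.2 ^ F.q - p.2)))

/-- The attractor `A_T = ⋂_{n ≥ 1} Tⁿ(R²)`. -/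
def NAField.Attractor (F : NAField K) (a b : K) : Set (K × K) :=
  ⋂ n ∈ {n : ℕ | 1 ≤ n}, (F.Tmap a b)^[n] '' unitPoly K

/-- The basin of attraction `B_T = ⋃_{n ≥ 1} T⁻ⁿ(R²)`. -/
def NAField.Basin (F : NAField K) (a b : K) : Set (K × K) :=
  ⋃ n ∈ {n : ℕ | 1 ≤ n}, (F.Tmap a b)^[n] ⁻¹' unitPoly K

/-- `T^k` for `k : ℤ`. -/
def NAField.iterZ (F : NAField K) (a b : K) (k : ℤ) : K × K → K × K :=
  if 0 ≤ k then (F.Tmap a b)^[k.toNat] else (F.Tinv a b)^[(-k).toNat]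

/-- The image under the conjugacy `ω` of the cylinder set of bisequences
agreeing with `s` on coordinates `-M, …, M`: points of the attractor whose
itinerary through the residue strips matches `s` on those coordinates. -/
def NAField.Cyl (F : NAField K) (a b : K) (s : ℤ → K) (M : ℕ) : Set (K × K) :=
  {p | p ∈ F.Attractor a b ∧
    ∀ k : ℤ, |k| ≤ (M : ℤ) → ‖(F.iterZ a b k p).1 - s k‖ ≤ ((F.q : ℝ))⁻¹}

/-!
Write `(x_n, y_n) = T⁻ⁿ (t, y_0)`, so that `x_0 = t`, `x_{n+1} = y_n` and
`x_n = a y_{n+1} + b (y_n ^ q - y_n)`. Solving the last relation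
for the `y_n` outside the power gives a fixed-point equation `y = Φ_t y` for the sequence `y`.
The residue field has `q` elements, so `q` and `x ^ q - x` lie in the maximal ideal; hence
`x ↦ x ^ q` contracts by `1/q` on a residue disc, and with `|b| = q`, `|a| ≤ 1` the operator
`Φ_t` is a `1/q`-contraction in the sup norm on sequences with `y_n` in the disc of `s_n`.
Its fixed point gives the curve `t ↦ (t, y_0(t))`; since the metric is ultrametric, changing `t`
moves `Φ_t` and therefore its fixed point by at most `|t - t'| / q`. A point lies in the attractor
iff its backward orbit stays in `R²`, and then the residue classes of the `y_n` form an itinerary.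
-/

namespace IsUltrametricDist

variable {E : Type*} [SeminormedAddGroup E] [IsUltrametricDist E] {x y : E} {C : ℝ}

theorem norm_add_le_of_norm_le (hx : ‖x‖ ≤ C) (hy : ‖y‖ ≤ C) : ‖x + y‖ ≤ C :=
  (norm_add_le_max x y).trans (max_le hx hy)

theorem norm_sub_le_of_norm_le (hx : ‖x‖ ≤ C) (hy : ‖y‖ ≤ C) : ‖x - y‖ ≤ C := by
  simpa [sub_eq_add_neg] using norm_add_le_of_norm_le hx ((norm_neg y).trans_le hy)

end IsUltrametricDist

open scoped BoundedContinuousFunction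

instance BoundedContinuousFunction.isUltrametricDist {α β : Type*} [TopologicalSpace α]
    [MetricSpace β] [IsUltrametricDist β] : IsUltrametricDist (α →ᵇ β) where
  dist_triangle_max f g h := by
    rw [BoundedContinuousFunction.dist_le (by positivity)]
    exact fun x ↦ (dist_triangle_max (f x) (g x) (h x)).trans
      (max_le_max (f.dist_coe_le_dist x) (g.dist_coe_le_dist x))

theorem ContractingWith.dist_fixedPoint_fixedPoint_le_of_isUltrametricDist {α : Type*}
    [MetricSpace α] [IsUltrametricDist α] [Nonempty α] [CompleteSpace α] {k k' : NNReal}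
    {f g : α → α} (hf : ContractingWith k f) (hg : ContractingWith k' g) {C : ℝ}
    (hfg : ∀ x, dist (f x) (g x) ≤ C) :
    dist (fixedPoint f hf) (fixedPoint g hg) ≤ C := by
  set x := fixedPoint f hf
  set y := fixedPoint g hg
  have hd : dist x y ≤ max (k * dist x y) C := by
    calc dist x y = dist (f x) (g y) := by
          rw [fixedPoint_isFixedPt hf, fixedPoint_isFixedPt hg]
      _ ≤ max (dist (f x) (f y)) (dist (f y) (g y)) := dist_triangle_max _ _ _
      _ ≤ max (k * dist x y) C := max_le_max (hf.dist_le_mul x y) (hfg y)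
  rcases le_max_iff.mp hd with h | h
  · have hk : (k : ℝ) < 1 := hf.1
    have : dist x y = 0 := by nlinarith [dist_nonneg (x := x) (y := y)]
    exact this ▸ dist_nonneg.trans (hfg x)
  · exact h

section PowSubPow

variable [IsUltrametricDist K]

theorem norm_pow_sub_pow_le_norm_sub {x y : K} (hx : ‖x‖ ≤ 1) (hy : ‖y‖ ≤ 1) (n : ℕ) :
    ‖x ^ n - y ^ n‖ ≤ ‖x - y‖ := by
  rw [← geom_sum₂_mul, norm_mul]
  refine mul_le_of_le_one_left (norm_nonneg _) ?_
  refine IsUltrametricDist.norm_sum_le_of_forall_le_of_nonneg zero_le_one fun i _ ↦ ?_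
  rw [norm_mul, norm_pow, norm_pow]
  exact mul_le_one₀ (pow_le_one₀ (norm_nonneg x) hx) (by positivity)
    (pow_le_one₀ (norm_nonneg y) hy)

theorem norm_pow_sub_pow_le_max_mul {x y : K} (hx : ‖x‖ ≤ 1) (hy : ‖y‖ ≤ 1) (n : ℕ) :
    ‖x ^ n - y ^ n‖ ≤ max ‖(n : K)‖ ‖x - y‖ * ‖x - y‖ := by
  rw [← geom_sum₂_mul, norm_mul]
  refine mul_le_mul_of_nonneg_right ?_ (norm_nonneg _)
  have hdiag : ∀ i ∈ Finset.range n, x ^ i * x ^ (n - 1 - i) = x ^ (n - 1) := by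
    intro i hi
    rw [← pow_add]
    congr 1
    grind
  have hsplit : ∑ i ∈ Finset.range n, x ^ i * y ^ (n - 1 - i) =
      ∑ i ∈ Finset.range n, x ^ i * (y ^ (n - 1 - i) - x ^ (n - 1 - i)) + n * x ^ (n - 1) := by
    simp only [mul_sub, Finset.sum_sub_distrib, Finset.sum_congr rfl hdiag, Finset.sum_const,
      Finset.card_range, nsmul_eq_mul]
    ring
  rw [hsplit]
  refine (IsUltrametricDist.norm_add_le_max _ _).trans (max_le ?_ ?_)
  · refine IsUltrametricDist.norm_sum_le_of_forall_le_of_nonneg (by positivity) fun i _ ↦ ?_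
    rw [norm_mul, norm_pow, norm_sub_rev]
    exact le_max_of_le_right <| (mul_le_of_le_one_left (norm_nonneg _)
      (pow_le_one₀ (norm_nonneg x) hx)).trans (norm_pow_sub_pow_le_norm_sub hx hy _)
  · rw [norm_mul, norm_pow]
    exact le_max_of_le_left <|
      mul_le_of_le_one_right (norm_nonneg _) (pow_le_one₀ (norm_nonneg x) hx)

end PowSubPow
namespace NAField

variable (F : NAField K)

theorem inv_q_lt_one : (F.q : ℝ)⁻¹ < 1 := inv_lt_one_of_one_lt₀ (by exact_mod_cast F.one_lt_q)

theorem norm_le_inv_q_of_norm_lt_one {x : K} (hx : ‖x‖ < 1) : ‖x‖ ≤ (F.q : ℝ)⁻¹ := by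
  rcases eq_or_ne x 0 with rfl | hx0
  · simp
  obtain ⟨n, hn⟩ := F.valGroup x hx0
  have hq : (1 : ℝ) < F.q := by exact_mod_cast F.one_lt_q
  rw [hn] at hx ⊢
  rw [zpow_lt_one_iff_right₀ hq] at hx
  simpa using zpow_le_zpow_right₀ hq.le (show n ≤ -1 by omega)

end NAField

section ResidueField

variable [IsUltrametricDist K]

open IsLocalRing

local notation "𝒪" => Valuation.integer (NormedField.valuation (K := K))

theorem NormedField.mem_integer_iff {x : K} : x ∈ 𝒪 ↔ ‖x‖ ≤ 1 := by
  simp [Valuation.mem_integer_iff, ← NNReal.coe_le_coe]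

theorem NormedField.norm_lt_one_iff_mem_maximalIdeal (x : 𝒪) :
    ‖(x : K)‖ < 1 ↔ x ∈ maximalIdeal 𝒪 := by
  rw [mem_maximalIdeal, mem_nonunits_iff,
    (Valuation.integer.integers _).isUnit_iff_valuation_eq_one]
  have hx := mem_integer_iff.mp x.2
  simp only [NormedField.valuation_apply, ← NNReal.coe_inj, coe_nnnorm, NNReal.coe_one]
  exact ⟨ne_of_lt, fun h ↦ lt_of_le_of_ne hx h⟩

theorem NormedField.residue_eq_residue_iff (x y : 𝒪) :
    residue 𝒪 x = residue 𝒪 y ↔ ‖(x : K) - y‖ < 1 := by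
  rw [← sub_eq_zero, ← map_sub, residue_eq_zero_iff, ← norm_lt_one_iff_mem_maximalIdeal]
  rfl

theorem NormedField.norm_pow_natCard_residueField_sub_self_lt_one
    [Finite (ResidueField 𝒪)] {x : K} (hx : ‖x‖ ≤ 1) :
    ‖x ^ Nat.card (ResidueField 𝒪) - x‖ < 1 := by
  have : Fintype (ResidueField 𝒪) := Fintype.ofFinite _
  set z : 𝒪 := ⟨x, mem_integer_iff.mpr hx⟩
  have := FiniteField.pow_card (residue 𝒪 z)
  rw [← Nat.card_eq_fintype_card, ← map_pow, residue_eq_residue_iff] at this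
  simpa [z] using this

theorem NormedField.norm_natCard_residueField_lt_one [Finite (ResidueField 𝒪)] :
    ‖(Nat.card (ResidueField 𝒪) : K)‖ < 1 := by
  have : Fintype (ResidueField 𝒪) := Fintype.ofFinite _
  have := FiniteField.cast_card_eq_zero (ResidueField 𝒪)
  rw [← Nat.card_eq_fintype_card, ← map_natCast (residue 𝒪), residue_eq_zero_iff,
    ← norm_lt_one_iff_mem_maximalIdeal] at this
  simpa using this

namespace NAField

variable (F : NAField K)

theorem natCard_residueField : Nat.card (ResidueField 𝒪) = F.q := by
  let f : F.reps → ResidueField 𝒪 := fun s ↦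
    residue 𝒪 ⟨s, NormedField.mem_integer_iff.mpr (F.norm_reps s s.2)⟩
  have hf : f.Bijective := by
    refine ⟨fun s t hst ↦ ?_, fun y ↦ ?_⟩
    · rw [NormedField.residue_eq_residue_iff] at hst
      by_contra hne
      exact (F.norm_le_inv_q_of_norm_lt_one hst).not_gt
        (F.reps_sep s s.2 t t.2 (Subtype.coe_ne_coe.mpr hne))
    · obtain ⟨z, rfl⟩ := residue_surjective y
      obtain ⟨s, hs, hzs⟩ := F.reps_cover z (NormedField.mem_integer_iff.mp z.2)
      refine ⟨⟨s, hs⟩, (NormedField.residue_eq_residue_iff _ _).mpr ?_⟩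
      simpa [norm_sub_rev] using hzs.trans_lt F.inv_q_lt_one
  rw [← Nat.card_eq_of_bijective f hf, Nat.card_eq_finsetCard, F.card_reps]

theorem norm_pow_q_sub_self_le {x : K} (hx : ‖x‖ ≤ 1) : ‖x ^ F.q - x‖ ≤ (F.q : ℝ)⁻¹ := by
  have := Nat.finite_of_card_ne_zero <| F.natCard_residueField ▸ (zero_lt_one.trans F.one_lt_q).ne'
  refine F.norm_le_inv_q_of_norm_lt_one ?_
  simpa [F.natCard_residueField] using NormedField.norm_pow_natCard_residueField_sub_self_lt_one hx

theorem norm_q_le : ‖(F.q : K)‖ ≤ (F.q : ℝ)⁻¹ := by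
  have := Nat.finite_of_card_ne_zero <| F.natCard_residueField ▸ (zero_lt_one.trans F.one_lt_q).ne'
  refine F.norm_le_inv_q_of_norm_lt_one ?_
  simpa [F.natCard_residueField] using NormedField.norm_natCard_residueField_lt_one (K := K)

theorem norm_pow_q_sub_pow_q_le {x y : K} (hx : ‖x‖ ≤ 1) (hy : ‖y‖ ≤ 1)
    (hxy : ‖x - y‖ ≤ (F.q : ℝ)⁻¹) : ‖x ^ F.q - y ^ F.q‖ ≤ (F.q : ℝ)⁻¹ * ‖x - y‖ :=
  (norm_pow_sub_pow_le_max_mul hx hy F.q).trans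
    (mul_le_mul_of_nonneg_right (max_le F.norm_q_le hxy) (norm_nonneg _))

end NAField

end ResidueField

def unitGraph (g : K → K) : Set (K × K) := {p | ‖p.1‖ ≤ 1 ∧ p.2 = g p.1}

namespace NAField

variable (F : NAField K)

section Dynamics

variable {a b : K}

theorem leftInverse_Tinv (ha : a ≠ 0) : Function.LeftInverse (F.Tinv a b) (F.Tmap a b) :=
  fun p ↦ Prod.ext rfl (by simp only [Tmap, Tinv]; field_simp; ring)

theorem rightInverse_Tinv (ha : a ≠ 0) : Function.RightInverse (F.Tinv a b) (F.Tmap a b) :=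
  fun p ↦ Prod.ext (by simp only [Tmap, Tinv]; field_simp; ring) rfl

theorem mapsTo_Tmap_unitPoly [IsUltrametricDist K] (ha : ‖a‖ ≤ 1) (hb : ‖b‖ ≤ F.q) :
    Set.MapsTo (F.Tmap a b) (unitPoly K) (unitPoly K) := by
  rintro ⟨x, y⟩ ⟨hx, hy⟩
  refine ⟨(IsUltrametricDist.norm_add_le_max _ _).trans (max_le ?_ ?_), hx⟩
  · rw [norm_mul]
    exact mul_le_one₀ ha (norm_nonneg _) hy
  · have hq : (0 : ℝ) < F.q := by exact_mod_cast zero_lt_one.trans F.one_lt_q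
    calc ‖b * (x ^ F.q - x)‖ ≤ F.q * (F.q : ℝ)⁻¹ := by
          rw [norm_mul]; gcongr; exact F.norm_pow_q_sub_self_le hx
      _ = 1 := mul_inv_cancel₀ hq.ne'

theorem mem_attractor_iff [IsUltrametricDist K] (ha0 : a ≠ 0) (ha : ‖a‖ ≤ 1) (hb : ‖b‖ ≤ F.q)
    {p : K × K} : p ∈ F.Attractor a b ↔ ∀ n, (F.Tinv a b)^[n] p ∈ unitPoly K := by
  have himage : ∀ n, (F.Tmap a b)^[n] '' unitPoly K = (F.Tinv a b)^[n] ⁻¹' unitPoly K := fun n ↦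
    congrFun (Set.image_eq_preimage_of_inverse ((F.leftInverse_Tinv ha0).iterate n)
      ((F.rightInverse_Tinv ha0).iterate n)) _
  simp only [Attractor, Set.mem_iInter₂, Set.mem_ofPred_eq, himage, Set.mem_preimage]
  refine ⟨fun h n ↦ ?_, fun h n _ ↦ h n⟩
  rcases n with _ | n
  · simpa [F.rightInverse_Tinv ha0 p] using F.mapsTo_Tmap_unitPoly ha hb (h 1 le_rfl)
  · exact h (n + 1) (by omega)

end Dynamics

section GraphOp

variable (a b : K)

/-- The operator `Φ_t` of the fixed-point equation; `Stream'.cons t y n` is `x_n`. -/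
def graphOp (t : K) (y : ℕ → K) (n : ℕ) : K :=
  y n ^ F.q - b⁻¹ * (Stream'.cons t y n - a * y (n + 1))

variable {a b}

theorem Tinv_snd_eq_iff (ha : a ≠ 0) (hb : b ≠ 0) {x y y' : K} :
    (F.Tinv a b (x, y)).2 = y' ↔ y ^ F.q - b⁻¹ * (x - a * y') = y := by
  simp only [Tinv]
  constructor <;> intro h
  · rw [← h]; field_simp; ring
  · rw [show y ^ F.q - y = b⁻¹ * (x - a * y') by linear_combination h]
    field_simp
    ring

theorem iterate_Tinv_of_graphOp_eq (ha : a ≠ 0) (hb : b ≠ 0) {t : K} {y : ℕ → K}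
    (hy : ∀ n, F.graphOp a b t y n = y n) (n : ℕ) :
    (F.Tinv a b)^[n] (t, y 0) = (Stream'.cons t y n, y n) := by
  induction n with
  | zero => rfl
  | succ n ih =>
    rw [Function.iterate_succ_apply', ih]
    exact Prod.ext rfl ((F.Tinv_snd_eq_iff ha hb).mpr (hy n))

theorem graphOp_iterate_Tinv (ha : a ≠ 0) (hb : b ≠ 0) (p : K × K) (n : ℕ) :
    F.graphOp a b p.1 (fun k ↦ ((F.Tinv a b)^[k] p).2) n = ((F.Tinv a b)^[n] p).2 := by
  have hfst : Stream'.cons p.1 (fun k ↦ ((F.Tinv a b)^[k] p).2) n = ((F.Tinv a b)^[n] p).1 := by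
    rcases n with _ | n
    · rfl
    · simp [Stream'.cons, Function.iterate_succ_apply', Tinv]
  rw [graphOp, hfst, ← F.Tinv_snd_eq_iff ha hb, Prod.mk.eta,
    ← Function.iterate_succ_apply' (F.Tinv a b) n p]

open IsUltrametricDist

theorem norm_inv_mul_le (hb : (F.q : ℝ) ≤ ‖b‖) (x : K) :
    ‖b⁻¹ * x‖ ≤ (F.q : ℝ)⁻¹ * ‖x‖ := by
  have hq : (0 : ℝ) < F.q := by exact_mod_cast zero_lt_one.trans F.one_lt_q
  rw [norm_mul, norm_inv]
  gcongr

theorem norm_graphOp_sub_graphOp_param_le (hb : (F.q : ℝ) ≤ ‖b‖) (t t' : K) (y : ℕ → K)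
    (n : ℕ) : ‖F.graphOp a b t y n - F.graphOp a b t' y n‖ ≤ (F.q : ℝ)⁻¹ * ‖t - t'‖ := by
  rcases n with _ | n
  · rw [show F.graphOp a b t y 0 - F.graphOp a b t' y 0 = -(b⁻¹ * (t - t')) by
      simp only [graphOp, Stream'.cons]; ring, norm_neg]
    exact F.norm_inv_mul_le hb _
  · simp only [graphOp, Stream'.cons, sub_self, norm_zero]
    positivity

variable [IsUltrametricDist K] {s y z : ℕ → K}

theorem norm_le_one_of_norm_sub_le {x r : K} (hr : ‖r‖ ≤ 1) (hx : ‖x - r‖ ≤ (F.q : ℝ)⁻¹) :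
    ‖x‖ ≤ 1 := by
  simpa using norm_add_le_of_norm_le (hx.trans F.inv_q_lt_one.le) hr

theorem norm_graphOp_sub_le (hs : ∀ n, ‖s n‖ ≤ 1) (ha : ‖a‖ ≤ 1) (hb : (F.q : ℝ) ≤ ‖b‖)
    {t : K} (ht : ‖t‖ ≤ 1) (hy : ∀ n, ‖y n - s n‖ ≤ (F.q : ℝ)⁻¹) (n : ℕ) :
    ‖F.graphOp a b t y n - s n‖ ≤ (F.q : ℝ)⁻¹ := by
  have hy1 n : ‖y n‖ ≤ 1 := F.norm_le_one_of_norm_sub_le (hs n) (hy n)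
  have hx : ‖Stream'.cons t y n - a * y (n + 1)‖ ≤ 1 := by
    refine norm_sub_le_of_norm_le ?_ ?_
    · rcases n with _ | n
      exacts [ht, hy1 n]
    · rw [norm_mul]
      exact mul_le_one₀ ha (norm_nonneg _) (hy1 _)
  rw [show F.graphOp a b t y n - s n = (y n ^ F.q - y n) + (y n - s n)
      - b⁻¹ * (Stream'.cons t y n - a * y (n + 1)) by rw [graphOp]; ring]
  refine norm_sub_le_of_norm_le
    (norm_add_le_of_norm_le (F.norm_pow_q_sub_self_le (hy1 n)) (hy n)) ?_
  exact (F.norm_inv_mul_le hb _).trans (mul_le_of_le_one_right (by positivity) hx)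

theorem norm_graphOp_sub_graphOp_le (hs : ∀ n, ‖s n‖ ≤ 1) (ha : ‖a‖ ≤ 1)
    (hb : (F.q : ℝ) ≤ ‖b‖) (t : K) (hy : ∀ n, ‖y n - s n‖ ≤ (F.q : ℝ)⁻¹)
    (hz : ∀ n, ‖z n - s n‖ ≤ (F.q : ℝ)⁻¹) {D : ℝ} (hD : 0 ≤ D)
    (hyz : ∀ n, ‖y n - z n‖ ≤ D) (n : ℕ) :
    ‖F.graphOp a b t y n - F.graphOp a b t z n‖ ≤ (F.q : ℝ)⁻¹ * D := by
  have hy1 n : ‖y n‖ ≤ 1 := F.norm_le_one_of_norm_sub_le (hs n) (hy n)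
  have hz1 n : ‖z n‖ ≤ 1 := F.norm_le_one_of_norm_sub_le (hs n) (hz n)
  have hx : ‖(Stream'.cons t y n - Stream'.cons t z n) - a * (y (n + 1) - z (n + 1))‖ ≤ D := by
    refine norm_sub_le_of_norm_le ?_ ?_
    · rcases n with _ | n
      exacts [by simpa [Stream'.cons] using hD, hyz n]
    · rw [norm_mul]
      exact (mul_le_of_le_one_left (norm_nonneg _) ha).trans (hyz _)
  rw [show F.graphOp a b t y n - F.graphOp a b t z n = (y n ^ F.q - z n ^ F.q)
      - b⁻¹ * ((Stream'.cons t y n - Stream'.cons t z n) - a * (y (n + 1) - z (n + 1))) by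
    simp only [graphOp]; ring]
  refine norm_sub_le_of_norm_le ?_ ((F.norm_inv_mul_le hb _).trans (by gcongr))
  have hyz' : ‖y n - z n‖ ≤ (F.q : ℝ)⁻¹ := by
    simpa using norm_sub_le_of_norm_le (hy n) (hz n)
  exact (F.norm_pow_q_sub_pow_q_le (hy1 n) (hz1 n) hyz').trans (by gcongr; exact hyz n)

end GraphOp

section FixedPoint

variable (s : ℕ → K)

def itineraryBall : Set (ℕ →ᵇ K) := {y | ∀ n, ‖y n - s n‖ ≤ (F.q : ℝ)⁻¹}

theorem isClosed_itineraryBall : IsClosed (F.itineraryBall s) := by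
  simp only [itineraryBall, Set.ofPred_forall]
  exact isClosed_iInter fun n ↦
    isClosed_le ((continuous_eval_const n).sub continuous_const).norm continuous_const

variable {s}

theorem dist_itineraryBall_le_iff {y z : F.itineraryBall s} {D : ℝ} (hD : 0 ≤ D) :
    dist y z ≤ D ↔ ∀ n, ‖(y : ℕ →ᵇ K) n - (z : ℕ →ᵇ K) n‖ ≤ D := by
  rw [Subtype.dist_eq, BoundedContinuousFunction.dist_le hD]
  simp only [dist_eq_norm]

variable {a b : K} [IsUltrametricDist K]

def graphMap (hs : ∀ n, ‖s n‖ ≤ 1) (ha : ‖a‖ ≤ 1) (hb : (F.q : ℝ) ≤ ‖b‖) (t : K) (ht : ‖t‖ ≤ 1)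
    (y : F.itineraryBall s) : F.itineraryBall s :=
  have h := F.norm_graphOp_sub_le hs ha hb ht y.2
  ⟨.ofNormedAddCommGroupDiscrete (F.graphOp a b t y.1) 1 fun n ↦
    F.norm_le_one_of_norm_sub_le (hs n) (h n), h⟩

theorem contractingWith_graphMap (hs : ∀ n, ‖s n‖ ≤ 1) (ha : ‖a‖ ≤ 1) (hb : (F.q : ℝ) ≤ ‖b‖)
    (t : K) (ht : ‖t‖ ≤ 1) : ContractingWith (F.q : NNReal)⁻¹ (F.graphMap hs ha hb t ht) := by
  refine ⟨by exact_mod_cast F.inv_q_lt_one, LipschitzWith.of_dist_le_mul fun y z ↦ ?_⟩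
  refine (F.dist_itineraryBall_le_iff (by positivity)).mpr fun n ↦ ?_
  push_cast
  exact F.norm_graphOp_sub_graphOp_le hs ha hb t y.2 z.2 dist_nonneg
    ((F.dist_itineraryBall_le_iff dist_nonneg).mp le_rfl) n

theorem dist_graphMap_graphMap_le (hs : ∀ n, ‖s n‖ ≤ 1) (ha : ‖a‖ ≤ 1)
    (hb : (F.q : ℝ) ≤ ‖b‖) {t t' : K} (ht : ‖t‖ ≤ 1) (ht' : ‖t'‖ ≤ 1)
    (y : F.itineraryBall s) :
    dist (F.graphMap hs ha hb t ht y) (F.graphMap hs ha hb t' ht' y) ≤ (F.q : ℝ)⁻¹ * ‖t - t'‖ :=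
  (F.dist_itineraryBall_le_iff (by positivity)).mpr fun n ↦
    F.norm_graphOp_sub_graphOp_param_le hb t t' _ n

theorem exists_graphOp_fixedPoint (hs : ∀ n, ‖s n‖ ≤ 1) (ha : ‖a‖ ≤ 1)
    (hb : (F.q : ℝ) ≤ ‖b‖) : ∃ Y : K → ℕ → K,
    (∀ t, ‖t‖ ≤ 1 → ∀ y : ℕ → K,
      ((∀ n, ‖y n - s n‖ ≤ (F.q : ℝ)⁻¹) ∧ ∀ n, F.graphOp a b t y n = y n) ↔ y = Y t) ∧
    ∀ t t', ‖t‖ ≤ 1 → ‖t'‖ ≤ 1 → ∀ n, ‖Y t n - Y t' n‖ ≤ (F.q : ℝ)⁻¹ * ‖t - t'‖ := by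
  have := F.complete
  have := F.isClosed_itineraryBall s
  have : Nonempty (F.itineraryBall s) := ⟨⟨.ofNormedAddCommGroupDiscrete s 1 hs, fun n ↦ by simp⟩⟩
  let fix t ht := ContractingWith.fixedPoint _ (F.contractingWith_graphMap hs ha hb t ht)
  refine ⟨fun t ↦ if ht : ‖t‖ ≤ 1 then fix t ht else s, fun t ht y ↦ ?_,
    fun t t' ht ht' ↦ ?_⟩
  · simp only [dif_pos ht]
    constructor
    · rintro ⟨hy, hfix⟩
      let Y : F.itineraryBall s := ⟨.ofNormedAddCommGroupDiscrete y 1 fun n ↦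
        F.norm_le_one_of_norm_sub_le (hs n) (hy n), hy⟩
      have hY : Y = fix t ht :=
        ContractingWith.fixedPoint_unique _ (Subtype.ext (BoundedContinuousFunction.ext hfix))
      exact congrArg (fun z : F.itineraryBall s ↦ ⇑(z : ℕ →ᵇ K)) hY
    · rintro rfl
      refine ⟨(fix t ht).2, fun n ↦ ?_⟩
      exact congrArg (fun z : F.itineraryBall s ↦ (z : ℕ →ᵇ K) n)
        (ContractingWith.fixedPoint_isFixedPt (F.contractingWith_graphMap hs ha hb t ht))
  · simp only [dif_pos ht, dif_pos ht']
    exact (F.dist_itineraryBall_le_iff (by positivity)).mp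
      (ContractingWith.dist_fixedPoint_fixedPoint_le_of_isUltrametricDist _ _
        (F.dist_graphMap_graphMap_le hs ha hb ht ht'))

end FixedPoint

section Itinerary

variable (a b : K)

def itinerarySet (s : ℕ → K) : Set (K × K) :=
  {p | ‖p.1‖ ≤ 1 ∧ ‖p.2‖ ≤ 1 ∧ ∀ n : ℕ, ‖((F.Tinv a b)^[n] p).1‖ ≤ 1 ∧
    ‖((F.Tinv a b)^[n] p).2 - s n‖ ≤ (F.q : ℝ)⁻¹}

variable {a b} [IsUltrametricDist K] {s : ℕ → K}

theorem mem_itinerarySet_iff (hs : ∀ n, ‖s n‖ ≤ 1) (ha : a ≠ 0) (hb : b ≠ 0) {p : K × K} :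
    p ∈ F.itinerarySet a b s ↔ ‖p.1‖ ≤ 1 ∧ ∃ y : ℕ → K,
      ((∀ n, ‖y n - s n‖ ≤ (F.q : ℝ)⁻¹) ∧ ∀ n, F.graphOp a b p.1 y n = y n) ∧ p.2 = y 0 := by
  constructor
  · rintro ⟨hp, -, horbit⟩
    exact ⟨hp, _, ⟨fun n ↦ (horbit n).2, F.graphOp_iterate_Tinv ha hb p⟩, rfl⟩
  · obtain ⟨t, y₀⟩ := p
    rintro ⟨ht, y, ⟨hy, hfix⟩, rfl : y₀ = y 0⟩
    have hy1 n : ‖y n‖ ≤ 1 := F.norm_le_one_of_norm_sub_le (hs n) (hy n)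
    refine ⟨ht, hy1 0, fun n ↦ ?_⟩
    rw [F.iterate_Tinv_of_graphOp_eq ha hb hfix]
    refine ⟨?_, hy n⟩
    rcases n with _ | n
    exacts [ht, hy1 n]

theorem exists_isLip_unitGraph_eq_itinerarySet (hs : ∀ n, ‖s n‖ ≤ 1) (ha0 : a ≠ 0)
    (ha : ‖a‖ ≤ 1) (hb : (F.q : ℝ) ≤ ‖b‖) :
    ∃ g : K → K, F.IsLip g ∧ unitGraph g = F.itinerarySet a b s := by
  have hb0 : b ≠ 0 :=
    norm_pos_iff.mp ((Nat.cast_pos.mpr (zero_lt_one.trans F.one_lt_q)).trans_le hb)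
  obtain ⟨Y, hY, hYlip⟩ := F.exists_graphOp_fixedPoint hs ha hb
  refine ⟨fun t ↦ Y t 0, ⟨fun t ht ↦ ?_, fun t t' ht ht' ↦ hYlip t t' ht ht' 0⟩, ?_⟩
  · exact F.norm_le_one_of_norm_sub_le (hs 0) (((hY t ht _).mpr rfl).1 0)
  · ext p
    simp only [unitGraph, Set.mem_ofPred_eq, F.mem_itinerarySet_iff hs ha0 hb0]
    exact and_congr_right fun ht ↦ by simp [hY p.1 ht]

theorem attractor_eq_iUnion_itinerarySet (ha0 : a ≠ 0) (ha : ‖a‖ ≤ 1) (hb : ‖b‖ ≤ F.q) :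
    F.Attractor a b = ⋃ (s : ℕ → K) (_ : ∀ k, s k ∈ F.reps), F.itinerarySet a b s := by
  ext p
  simp only [F.mem_attractor_iff ha0 ha hb, Set.mem_iUnion]
  constructor
  · intro h
    choose s hs hps using fun n ↦ F.reps_cover _ (h n).2
    exact ⟨s, hs, (h 0).1, (h 0).2, fun n ↦ ⟨(h n).1, hps n⟩⟩
  · rintro ⟨s, hs, -, -, horbit⟩ n
    exact ⟨(horbit n).1, F.norm_le_one_of_norm_sub_le (F.norm_reps _ (hs n)) (horbit n).2⟩

end Itinerary

end NAField

theorem stmt13 (F : NAField K) (a b : K) (ha0 : a ≠ 0) (ha : ‖a‖ < 1)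
    (hb : ‖b‖ = (F.q : ℝ)) :
    ∃ gseq : (ℕ → K) → K → K,
      (∀ s : ℕ → K, (∀ k, s k ∈ F.reps) →
        F.IsLip (gseq s) ∧
        {p : K × K | ‖p.1‖ ≤ 1 ∧ p.2 = gseq s p.1} =
          {p : K × K | ‖p.1‖ ≤ 1 ∧ ‖p.2‖ ≤ 1 ∧
            ∀ n : ℕ, ‖((F.Tinv a b)^[n] p).1‖ ≤ 1 ∧
              ‖((F.Tinv a b)^[n] p).2 - s n‖ ≤ ((F.q : ℝ))⁻¹}) ∧
      F.Attractor a b =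
        ⋃ (s : ℕ → K) (_ : ∀ k, s k ∈ F.reps),
          {p : K × K | ‖p.1‖ ≤ 1 ∧ p.2 = gseq s p.1} := by
  have := IsUltrametricDist.isUltrametricDist_of_isNonarchimedean_norm F.na
  have hgraph (s : ℕ → K) : ∃ g : K → K, (∀ k, s k ∈ F.reps) →
      F.IsLip g ∧ unitGraph g = F.itinerarySet a b s := by
    by_cases hs : ∀ k, s k ∈ F.reps
    · obtain ⟨g, hg⟩ := F.exists_isLip_unitGraph_eq_itinerarySet
        (fun k ↦ F.norm_reps _ (hs k)) ha0 ha.le hb.ge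
      exact ⟨g, fun _ ↦ hg⟩
    · exact ⟨id, fun h ↦ absurd h hs⟩
  choose gseq hgseq using hgraph
  refine ⟨gseq, hgseq, ?_⟩
  rw [F.attractor_eq_iUnion_itinerarySet ha0 ha.le hb.le]
  exact Set.iUnion₂_congr fun s hs ↦ (hgseq s hs).2.symm
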